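/- Define cell I: +1 ⊢ E∨H, -1 ⊢ E∨EH; cell IV: +1 ⊢ E, -1 ⊢ H∨EH; cell V: +1 ⊢ EH, -1 ⊢ E∨H. Then the triple {I, IV, V} is complete: for every sign vector (s₁,s₂,s₃) ∈ {+1,-1}³, the conjunction of implied propositions is either contradictory or determines a unique condition; specifically (1,1,1)⇒⊥, (1,1,-1)⇒E, (1,-1,1)⇒⊥, (1,-1,-1)⇒H, (-1,1,1)⇒⊥, (-1,1,-1)⇒E, (-1,-1,1)⇒EH, (-1,-1,-1)⇒⊥. -/
import Mathlib


inductive Cond : Type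
  | E | H | EH
deriving DecidableEq

open Cond

theorem stmt2 (a : Cond) :
    (((a = E ∨ a = H) ∧ (a = E) ∧ (a = EH)) → False) ∧
    (((a = E ∨ a = H) ∧ (a = E) ∧ (a = E ∨ a = H)) → a = E) ∧
    (((a = E ∨ a = H) ∧ (a = H ∨ a = EH) ∧ (a = EH)) → False) ∧
    (((a = E ∨ a = H) ∧ (a = H ∨ a = EH) ∧ (a = E ∨ a = H)) → a = H) ∧
    (((a = E ∨ a = EH) ∧ (a = E) ∧ (a = EH)) → False) ∧
    (((a = E ∨ a = EH) ∧ (a = E) ∧ (a = E ∨ a = H)) → a = E) ∧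
    (((a = E ∨ a = EH) ∧ (a = H ∨ a = EH) ∧ (a = EH)) → a = EH) ∧
    (((a = E ∨ a = EH) ∧ (a = H ∨ a = EH) ∧ (a = E ∨ a = H)) → False) := by
  cases a <;> simp_all
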